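/- arXiv:2505.01416 — 2 statements merged into one kernel-verified Lean document; each statement's English description precedes it below -/
import Mathlib

section
/- Let K_i be the complete graph on i vertices and let Δ_{i,2} be the Stanley–Reisner simplicial complex associated to the cut ideal P_{i,2} of K_i. Then F ⊆ E(K_i) is a facet of Δ_{i,2} if and only if F = E(K_i) ∖ T for some spanning tree T of K_i. -/
open MvPolynomial Finset

noncomputable section
open scoped Classical

variable {σ : Type*}

/-- The ideal generated by the monomials `x^μ`, `μ ∈ S`. -/
def monIdeal (K : Type*) [Field K] {σ : Type*} (S : Finset (σ →₀ ℕ)) :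
    Ideal (MvPolynomial σ K) :=
  Ideal.span ((fun μ => (monomial μ 1 : MvPolynomial σ K)) '' ↑S)

/-- The minimal elements of a finite set of exponent vectors; these are the exponents of
the minimal monomial generating set of the monomial ideal generated by `S`. -/
def minGen {σ : Type*} (S : Finset (σ →₀ ℕ)) : Finset (σ →₀ ℕ) :=
  S.filter fun μ => ∀ ν ∈ S, ν ≤ μ → ν = μ

/-- Exponents of lcm's of pairs of distinct monomials with exponents in `S`
(the lcm of `x^μ` and `x^ν` is `x^(μ ⊔ ν)`). -/
def pairLcms {σ : Type*} (S : Finset (σ →₀ ℕ)) : Finset (σ →₀ ℕ) :=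
  ((S ×ˢ S).filter fun p => p.1 ≠ p.2).image fun p => p.1 ⊔ p.2

/-- Generating exponents of the stepwise lcm-filtration: `stepGens S k` generates `Ī_{k+1}`,
where `Ī_1` is generated by `S` and `Ī_{k+1}` is generated by the lcm's of pairs of distinct
elements of the minimal monomial generating set of `Ī_k`. -/
def stepGens {σ : Type*} (S : Finset (σ →₀ ℕ)) : ℕ → Finset (σ →₀ ℕ)
  | 0 => S
  | k + 1 => pairLcms (minGen (stepGens S k))

/-- `Ī_k`, the `k`-th step (`k ≥ 1`) of the stepwise lcm-filtration of the monomial ideal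
generated by the monomials with exponents in `S`. -/
def stepIdeal (K : Type*) [Field K] {σ : Type*} (S : Finset (σ →₀ ℕ)) (k : ℕ) :
    Ideal (MvPolynomial σ K) :=
  monIdeal K (stepGens S (k - 1))

/-- Exponents of the lcm's of all `k`-element subsets of `S`. -/
def lcmFoldGens {σ : Type*} (S : Finset (σ →₀ ℕ)) (k : ℕ) : Finset (σ →₀ ℕ) :=
  (S.powersetCard k).image fun T => T.sup id

/-- The `k`-fold lcm-ideal `I_k` of the monomial ideal whose minimal monomial generating set
has exponents `S`. -/
def lcmFoldIdeal (K : Type*) [Field K] {σ : Type*} (S : Finset (σ →₀ ℕ)) (k : ℕ) :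
    Ideal (MvPolynomial σ K) :=
  monIdeal K (lcmFoldGens S k)

/-- The edges of the complete graph `K_i` on vertex set `Fin i`. -/
abbrev Edge (i : ℕ) := {e : Sym2 (Fin i) // ¬ e.IsDiag}

/-- An edge `e` of `K_i` crosses the partition `P` if no part of `P` contains both of its
endpoints. -/
def crosses {i : ℕ} (P : Finpartition (univ : Finset (Fin i))) (e : Sym2 (Fin i)) : Prop :=
  ¬ ∃ t ∈ P.parts, ∀ v ∈ e, v ∈ t

/-- `E(C)`: the set of edges of `K_i` whose endpoints lie in different parts of `P`. -/
def cutEdges {i : ℕ} (P : Finpartition (univ : Finset (Fin i))) : Finset (Edge i) :=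
  univ.filter fun e => crosses P e.val

/-- The exponent vector of the cut monomial `m_C = ∏_{e ∈ E(C)} x_e` of the partition `P`. -/
def cutExp {i : ℕ} (P : Finpartition (univ : Finset (Fin i))) : Edge i →₀ ℕ :=
  ∑ e ∈ cutEdges P, Finsupp.single e 1

/-- The cut monomial `m_C = ∏_{e ∈ E(C)} x_e` of the partition `P`, with respect to `K_i`. -/
def cutMon (K : Type*) [Field K] {i : ℕ} (P : Finpartition (univ : Finset (Fin i))) :
    MvPolynomial (Edge i) K := monomial (cutExp P) 1

instance {i : ℕ} : Finite (Finpartition (univ : Finset (Fin i))) :=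
  Finite.of_injective Finpartition.parts fun a b h => Finpartition.ext (by simp [h])

/-- The exponents of the cut monomials of all `j`-partitions of the vertex set of `K_i`. -/
def cutGens (i j : ℕ) : Finset (Edge i →₀ ℕ) :=
  ((Set.toFinite {P : Finpartition (univ : Finset (Fin i)) | P.parts.card = j}).image
    cutExp).toFinset

/-- `P_{i,j}`: the ideal generated by the cut monomials of all `j`-partitions of the vertex
set of `K_i` (for the complete graph every `j`-partition is a `j`-cut). -/
def Pij (K : Type*) [Field K] (i j : ℕ) : Ideal (MvPolynomial (Edge i) K) :=
  monIdeal K (cutGens i j)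

/-- The exponent vector of the squarefree monomial `∏_{e ∈ F} x_e`. -/
def sfExpE {i : ℕ} (F : Finset (Edge i)) : Edge i →₀ ℕ :=
  ∑ e ∈ F, Finsupp.single e 1

/-- `F` is a face of the Stanley–Reisner complex `Δ_{i,j}` of the squarefree monomial ideal
`P_{i,j}`, i.e. `∏_{e ∈ F} x_e ∉ P_{i,j}`. -/
def isFace (K : Type*) [Field K] (i j : ℕ) (F : Finset (Edge i)) : Prop :=
  (monomial (sfExpE F) 1 : MvPolynomial (Edge i) K) ∉ Pij K i j

/-- `F` is a facet of `Δ_{i,j}`: a face maximal with respect to inclusion. -/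
def isFacet (K : Type*) [Field K] (i j : ℕ) (F : Finset (Edge i)) : Prop :=
  isFace K i j F ∧ ∀ F' : Finset (Edge i), isFace K i j F' → F ⊆ F' → F = F'

/-- The spanning subgraph of `K_i` with edge set `S`. -/
def graphOf {i : ℕ} (S : Finset (Edge i)) : SimpleGraph (Fin i) :=
  SimpleGraph.fromEdgeSet (Subtype.val '' (S : Set (Edge i)))


section Aux

variable {i : ℕ}

lemma sfExpE_apply (F : Finset (Edge i)) (e : Edge i) :
    sfExpE F e = if e ∈ F then 1 else 0 := by
  classical
  simp [sfExpE, Finsupp.finset_sum_apply, Finsupp.single_apply]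

lemma sfExpE_le_iff {A B : Finset (Edge i)} : sfExpE A ≤ sfExpE B ↔ A ⊆ B := by
  constructor
  · intro h e he
    have h2 := h e
    rw [sfExpE_apply, sfExpE_apply, if_pos he] at h2
    by_contra hB
    rw [if_neg hB] at h2
    omega
  · intro h e
    rw [sfExpE_apply, sfExpE_apply]
    split_ifs with h1 h2
    · exact le_rfl
    · exact absurd (h h1) h2
    · exact Nat.zero_le _
    · exact le_rfl

lemma monomial_mem_monIdeal {K : Type*} [Field K] {S : Finset (Edge i →₀ ℕ)}
    {μ : Edge i →₀ ℕ} :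
    (monomial μ 1 : MvPolynomial (Edge i) K) ∈ monIdeal K S ↔ ∃ ν ∈ S, ν ≤ μ := by
  rw [monIdeal, mem_ideal_span_monomial_image]
  simp [support_monomial]

lemma mem_cutGens {j : ℕ} {μ : Edge i →₀ ℕ} :
    μ ∈ cutGens i j ↔
      ∃ P : Finpartition (univ : Finset (Fin i)), P.parts.card = j ∧ cutExp P = μ := by
  simp only [cutGens, Set.Finite.mem_toFinset, Set.mem_image, Set.mem_setOf_eq]

lemma cutExp_eq (P : Finpartition (univ : Finset (Fin i))) :
    cutExp P = sfExpE (cutEdges P) := rfl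

lemma isFace_iff_forall {K : Type*} [Field K] {F : Finset (Edge i)} :
    isFace K i 2 F ↔
      ∀ P : Finpartition (univ : Finset (Fin i)), P.parts.card = 2 → ¬ cutEdges P ⊆ F := by
  unfold isFace Pij
  rw [monomial_mem_monIdeal]
  constructor
  · intro h P hP hsub
    exact h ⟨cutExp P, mem_cutGens.mpr ⟨P, hP, rfl⟩, by rw [cutExp_eq]; exact sfExpE_le_iff.mpr hsub⟩
  · rintro h ⟨ν, hν, hle⟩
    obtain ⟨P, hP, rfl⟩ := mem_cutGens.mp hν
    rw [cutExp_eq] at hle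
    exact h P hP (sfExpE_le_iff.mp hle)

end Aux


section GraphAux

variable {i : ℕ}

lemma graphOf_adj {S : Finset (Edge i)} {a b : Fin i} :
    (graphOf S).Adj a b ↔ (∃ ε ∈ S, ε.val = s(a, b)) ∧ a ≠ b := by
  simp only [graphOf, SimpleGraph.fromEdgeSet_adj, Set.mem_image, Finset.mem_coe]

lemma graphOf_mono {S S' : Finset (Edge i)} (h : S ⊆ S') : graphOf S ≤ graphOf S' :=
  SimpleGraph.fromEdgeSet_mono (Set.image_mono (by exact_mod_cast h))

lemma graphOf_erase (T : Finset (Edge i)) (ε : Edge i) :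
    graphOf T \ SimpleGraph.fromEdgeSet {ε.val} = graphOf (T.erase ε) := by
  ext a b
  simp only [SimpleGraph.sdiff_adj, graphOf_adj, SimpleGraph.fromEdgeSet_adj,
    Set.mem_singleton_iff]
  constructor
  · rintro ⟨⟨⟨δ, hδ, hvalδ⟩, hab⟩, hne⟩
    refine ⟨⟨δ, Finset.mem_erase.mpr ⟨?_, hδ⟩, hvalδ⟩, hab⟩
    rintro rfl
    exact hne ⟨hvalδ.symm, hab⟩
  · rintro ⟨⟨δ, hδ, hvalδ⟩, hab⟩
    obtain ⟨hδε, hδT⟩ := Finset.mem_erase.mp hδ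
    refine ⟨⟨⟨δ, hδT, hvalδ⟩, hab⟩, fun h => hδε (Subtype.ext ?_)⟩
    rw [hvalδ, h.1]

lemma walk_cross {V : Type*} {G : SimpleGraph V} (A : Finset V) :
    ∀ {u v : V}, G.Walk u v → u ∈ A → v ∉ A → ∃ a b, G.Adj a b ∧ a ∈ A ∧ b ∉ A
  | u, _, SimpleGraph.Walk.nil, hu, hv => absurd hu hv
  | u, v, SimpleGraph.Walk.cons (v := m) h p, hu, hv =>
    if hm : m ∈ A then walk_cross A p hm hv else ⟨u, m, h, hu, hm⟩

lemma reachable_del {V : Type*} {G : SimpleGraph V} {x y : V}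
    (hxy : (G \ SimpleGraph.fromEdgeSet {s(x, y)}).Reachable x y) :
    ∀ {u v : V}, G.Walk u v → (G \ SimpleGraph.fromEdgeSet {s(x, y)}).Reachable u v
  | u, _, SimpleGraph.Walk.nil => SimpleGraph.Reachable.refl u
  | u, v, SimpleGraph.Walk.cons (v := m) h p => by
    refine SimpleGraph.Reachable.trans ?_ (reachable_del hxy p)
    by_cases he : s(u, m) = s(x, y)
    · rcases Sym2.eq_iff.mp he with ⟨rfl, rfl⟩ | ⟨rfl, rfl⟩
      · exact hxy
      · exact hxy.symm
    · refine SimpleGraph.Adj.reachable ?_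
      rw [SimpleGraph.sdiff_adj, SimpleGraph.fromEdgeSet_adj]
      exact ⟨h, fun c => he c.1⟩

lemma isFace_iff_connected {K : Type*} [Field K] (hi : 0 < i) (F : Finset (Edge i)) :
    isFace K i 2 F ↔ (graphOf (univ \ F)).Connected := by
  have hne : Nonempty (Fin i) := Fin.pos_iff_nonempty.mp hi
  rw [isFace_iff_forall]
  constructor
  · intro h
    rw [SimpleGraph.connected_iff]
    refine ⟨fun u v => ?_, hne⟩
    by_contra hreach
    set G := graphOf (univ \ F) with hG
    set A : Finset (Fin i) := univ.filter (fun w => G.Reachable u w) with hA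
    have huA : u ∈ A := Finset.mem_filter.mpr ⟨Finset.mem_univ _, SimpleGraph.Reachable.refl u⟩
    have hvA : v ∉ A := fun hv => hreach (Finset.mem_filter.mp hv).2
    have hAne : A ≠ univ \ A := by
      intro he
      have := huA
      rw [he] at this
      exact (Finset.mem_sdiff.mp this).2 huA
    have hA'ne : (univ \ A).Nonempty := ⟨v, Finset.mem_sdiff.mpr ⟨Finset.mem_univ _, hvA⟩⟩
    set P : Finpartition (univ : Finset (Fin i)) :=
      ⟨{A, univ \ A},
        by
          rw [Finset.supIndep_pair hAne]
          exact Finset.disjoint_sdiff,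
        by
          rw [Finset.sup_insert, Finset.sup_singleton, id_eq, id_eq]
          exact Finset.union_sdiff_of_subset (Finset.subset_univ A),
        by
          simp only [Finset.bot_eq_empty, Finset.mem_insert, Finset.mem_singleton]
          push_neg
          exact ⟨Ne.symm (Finset.nonempty_iff_ne_empty.mp ⟨u, huA⟩),
            Ne.symm (Finset.nonempty_iff_ne_empty.mp hA'ne)⟩⟩ with hP
    refine h P (Finset.card_pair hAne) ?_
    intro ε hε
    have hcross : crosses P ε.val := (Finset.mem_filter.mp hε).2
    by_contra hεF
    obtain ⟨e, hd⟩ := ε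
    induction e using Sym2.ind with
    | _ a b =>
      have hab : a ≠ b := fun hab => hd (Sym2.mk_isDiag_iff.mpr hab)
      have hadj : G.Adj a b := by
        rw [hG, graphOf_adj]
        exact ⟨⟨⟨s(a, b), hd⟩, Finset.mem_sdiff.mpr ⟨Finset.mem_univ _, hεF⟩, rfl⟩, hab⟩
      have hsame : (a ∈ A ∧ b ∈ A) ∨ (a ∉ A ∧ b ∉ A) := by
        by_cases ha : a ∈ A
        · left
          refine ⟨ha, ?_⟩
          have : G.Reachable u a := by
            rw [hA] at ha
            exact (Finset.mem_filter.mp ha).2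
          have : G.Reachable u b := this.trans hadj.reachable
          simp [hA, this]
        · right
          refine ⟨ha, fun hb => ha ?_⟩
          have : G.Reachable u b := by
            rw [hA] at hb
            exact (Finset.mem_filter.mp hb).2
          have : G.Reachable u a := this.trans hadj.symm.reachable
          simp [hA, this]
      refine hcross ?_
      rcases hsame with ⟨ha, hb⟩ | ⟨ha, hb⟩
      · refine ⟨A, by simp [hP], fun w hw => ?_⟩
        rcases Sym2.mem_iff.mp hw with rfl | rfl
        · exact ha
        · exact hb
      · refine ⟨univ \ A, by simp [hP], fun w hw => ?_⟩
        rcases Sym2.mem_iff.mp hw with rfl | rfl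
        · exact Finset.mem_sdiff.mpr ⟨Finset.mem_univ _, ha⟩
        · exact Finset.mem_sdiff.mpr ⟨Finset.mem_univ _, hb⟩
  · intro hconn P hP hsub
    obtain ⟨A, B, hAB, hparts⟩ := Finset.card_eq_two.mp hP
    have hAmem : A ∈ P.parts := by rw [hparts]; exact Finset.mem_insert_self _ _
    have hBmem : B ∈ P.parts := by rw [hparts]; simp
    have hAne : A.Nonempty := P.nonempty_of_mem_parts hAmem
    have hBne : B.Nonempty := P.nonempty_of_mem_parts hBmem
    have hdisj : Disjoint A B := P.disjoint hAmem hBmem hAB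
    obtain ⟨a, ha⟩ := hAne
    obtain ⟨b, hb⟩ := hBne
    have hbA : b ∉ A := fun hbA => (Finset.disjoint_left.mp hdisj) hbA hb
    obtain ⟨p⟩ := hconn.preconnected a b
    obtain ⟨x, y, hadj, hxA, hyA⟩ := walk_cross A p ha hbA
    obtain ⟨⟨ε, hεS, hval⟩, hxy⟩ := graphOf_adj.mp hadj
    have hεcut : ε ∈ cutEdges P := by
      rw [cutEdges, Finset.mem_filter]
      refine ⟨Finset.mem_univ _, ?_⟩
      rintro ⟨t, ht, hall⟩
      rw [hparts] at ht
      have hx : x ∈ t := hall x (by rw [hval]; exact Sym2.mem_mk_left _ _)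
      have hy : y ∈ t := hall y (by rw [hval]; exact Sym2.mem_mk_right _ _)
      rcases Finset.mem_insert.mp ht with rfl | ht
      · exact hyA hy
      · rw [Finset.mem_singleton] at ht
        subst ht
        exact (Finset.disjoint_left.mp hdisj) hxA hx
    exact (Finset.mem_sdiff.mp hεS).2 (hsub hεcut)

lemma tree_of_minimal (hi : 0 < i) {T : Finset (Edge i)} (hconn : (graphOf T).Connected)
    (hmin : ∀ ε ∈ T, ¬ (graphOf (T.erase ε)).Connected) : (graphOf T).IsTree := by
  refine ⟨hconn, ?_⟩
  intro v c hc
  cases c with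
  | nil => simpa using hc.three_le_length
  | @cons _ m _ h p =>
    have hmem : s(v, m) ∈ (SimpleGraph.Walk.cons h p).edges := by
      rw [SimpleGraph.Walk.edges_cons]
      exact List.mem_cons_self
    have key := SimpleGraph.adj_and_reachable_delete_edges_iff_exists_cycle.mpr
      ⟨v, SimpleGraph.Walk.cons h p, hc, hmem⟩
    obtain ⟨⟨ε, hεT, hval⟩, hvm⟩ := graphOf_adj.mp key.1
    refine hmin ε hεT ?_
    rw [← graphOf_erase, hval, SimpleGraph.connected_iff]
    refine ⟨fun u w => ?_, hconn.nonempty⟩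
    obtain ⟨q⟩ := hconn.preconnected u w
    exact reachable_del key.2 q

lemma not_connected_erase_of_tree {T : Finset (Edge i)} (htree : (graphOf T).IsTree)
    {ε : Edge i} (hε : ε ∈ T) : ¬ (graphOf (T.erase ε)).Connected := by
  obtain ⟨e, hd⟩ := ε
  induction e using Sym2.ind with
  | _ a b =>
    have hab : a ≠ b := fun hab => hd (Sym2.mk_isDiag_iff.mpr hab)
    intro hconn
    have hadj : (graphOf T).Adj a b := graphOf_adj.mpr ⟨⟨⟨s(a, b), hd⟩, hε, rfl⟩, hab⟩
    have hbridge := (SimpleGraph.isAcyclic_iff_forall_adj_isBridge.mp htree.2) hadj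
    rw [SimpleGraph.isBridge_iff] at hbridge
    refine hbridge ?_
    have := graphOf_erase T ⟨s(a, b), hd⟩
    rw [SimpleGraph.deleteEdges, this]
    exact hconn.preconnected a b

end GraphAux

/-- Let `K_i` be the complete graph on `i ≥ 1` vertices and `Δ_{i,2}` the
Stanley–Reisner complex of the cut ideal `P_{i,2}` of `K_i`.  Then `F ⊆ E(K_i)` is a facet of
`Δ_{i,2}` if and only if `F = E(K_i) ∖ T` for some spanning tree `T` of `K_i` (i.e. a set of
edges whose spanning subgraph is a tree). -/
theorem facet_iff_compl_spanning_tree (K : Type*) [Field K] (i : ℕ) (hi : 0 < i)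
    (F : Finset (Edge i)) :
    isFacet K i 2 F ↔ ∃ T : Finset (Edge i), (graphOf T).IsTree ∧ F = univ \ T := by
  have hTF : ∀ S : Finset (Edge i), univ \ (univ \ S) = S := fun S => by
    rw [Finset.sdiff_sdiff_self_left, Finset.univ_inter]
  constructor
  · rintro ⟨hface, hmax⟩
    refine ⟨univ \ F, ?_, (hTF F).symm⟩
    refine tree_of_minimal hi ((isFace_iff_connected hi F).mp hface) ?_
    intro ε hε hconn'
    have hface' : isFace K i 2 (univ \ (univ \ F).erase ε) := by
      rw [isFace_iff_connected hi, hTF]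
      exact hconn'
    have hsub : F ⊆ univ \ (univ \ F).erase ε := by
      intro x hx
      rw [Finset.mem_sdiff]
      exact ⟨Finset.mem_univ _, fun hxe =>
        (Finset.mem_sdiff.mp (Finset.mem_of_mem_erase hxe)).2 hx⟩
    have heq := hmax _ hface' hsub
    have hεF : ε ∉ F := (Finset.mem_sdiff.mp hε).2
    have hεin : ε ∈ univ \ (univ \ F).erase ε :=
      Finset.mem_sdiff.mpr ⟨Finset.mem_univ _, Finset.notMem_erase _ _⟩
    rw [← heq] at hεin
    exact hεF hεin
  · rintro ⟨T, htree, rfl⟩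
    have hconnT : (graphOf T).Connected := htree.isConnected
    constructor
    · rw [isFace_iff_connected hi, hTF]
      exact hconnT
    · intro F' hF' hsub
      by_contra hne
      obtain ⟨ε, hεF', hεnot⟩ := Finset.exists_of_ssubset (lt_of_le_of_ne hsub hne)
      have hεT : ε ∈ T := by
        by_contra hc
        exact hεnot (Finset.mem_sdiff.mpr ⟨Finset.mem_univ _, hc⟩)
      have hsub2 : univ \ F' ⊆ T.erase ε := by
        intro x hx
        rw [Finset.mem_erase]
        have hxF' : x ∉ F' := (Finset.mem_sdiff.mp hx).2
        refine ⟨fun h => hxF' (h ▸ hεF'), ?_⟩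
        by_contra hxT
        exact hxF' (hsub (Finset.mem_sdiff.mpr ⟨Finset.mem_univ _, hxT⟩))
      have hconn' : (graphOf (univ \ F')).Connected := (isFace_iff_connected hi F').mp hF'
      exact not_connected_erase_of_tree htree hεT (hconn'.mono (graphOf_mono hsub2))
end
end

section
/- Let k ≥ 1 and let C_1, …, C_{2^{k−1}} be 2^{k−1} pairwise distinct 2-partitions of {1,…,i}. Then there exists a (k+1)-partition σ of {1,…,i} whose cut monomial with respect to K_i satisfies m_σ | lcm(m_{C_1}, …, m_{C_{2^{k−1}}}). -/
open MvPolynomial Finset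

noncomputable section
open scoped Classical

variable {σ : Type*}

section AuxProof

lemma cutExp_apply' {i : ℕ} (P : Finpartition (univ : Finset (Fin i))) (e : Edge i) :
    cutExp P e = if e ∈ cutEdges P then 1 else 0 := by
  classical
  rw [cutExp, Finsupp.finset_sum_apply]
  simp [Finsupp.single_apply]

lemma exists_parts_pair {i : ℕ} (Q : Finpartition (univ : Finset (Fin i)))
    (h2 : Q.parts.card = 2) : ∃ a : Finset (Fin i), Q.parts = {a, univ \ a} := by
  obtain ⟨a, b, hab, hparts⟩ := Finset.card_eq_two.mp h2
  refine ⟨a, ?_⟩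
  have hd : Disjoint a b := Q.disjoint (by simp [hparts]) (by simp [hparts]) hab
  have hsup : a ⊔ b = univ := by
    have h := Q.sup_parts; rw [hparts] at h
    simpa using h
  have hb : b = univ \ a := by
    ext x
    simp only [mem_sdiff, mem_univ, true_and]
    constructor
    · intro hx
      exact fun hxa => (Finset.disjoint_left.mp hd hxa) hx
    · intro hx
      have hxu : x ∈ a ⊔ b := hsup ▸ mem_univ x
      rcases Finset.mem_union.mp hxu with h | h
      · exact absurd h hx
      · exact h
  rw [hparts, hb]

end AuxProof

/-- Let `k ≥ 1` and let `C_1, …, C_{2^{k−1}}` be pairwise distinct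
`2`-partitions of `{1,…,i}`.  Then there exists a `(k+1)`-partition `σ` of `{1,…,i}` whose cut
monomial with respect to `K_i` divides `lcm(m_{C_1}, …, m_{C_{2^{k−1}}})`. -/
theorem exists_partition_cutMon_dvd_lcm (K : Type*) [Field K] (i k : ℕ) (hk : 1 ≤ k)
    (C : Fin (2 ^ (k - 1)) → Finpartition (univ : Finset (Fin i)))
    (hC2 : ∀ m, (C m).parts.card = 2) (hinj : Function.Injective C) :
    ∃ P : Finpartition (univ : Finset (Fin i)), P.parts.card = k + 1 ∧
      cutMon K P ∣ (monomial (Finset.univ.sup fun m => cutExp (C m)) 1 : MvPolynomial (Edge i) K) := by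
  classical
  have hNpos : 0 < 2 ^ (k - 1) := Nat.two_pow_pos _
  have hi2 : 2 ≤ i := by
    have h := Finpartition.card_parts_le_card (P := C ⟨0, hNpos⟩)
    rw [hC2] at h
    simpa using h
  have hAex : ∀ m, ∃ a : Finset (Fin i), (C m).parts = {a, univ \ a} :=
    fun m => exists_parts_pair _ (hC2 m)
  choose A hA using hAex
  set χ : Fin i → Fin (2 ^ (k - 1)) → Bool := fun v m => decide (v ∈ A m) with hχ
  -- distinct columns give distinct indices
  have hcol : ∀ m m' : Fin (2 ^ (k - 1)),
      ((∀ v, χ v m = χ v m') ∨ (∀ v, χ v m = !χ v m')) → m = m' := by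
    intro m m' h
    apply hinj
    rcases h with h | h
    · have hAeq : A m = A m' := by
        ext v
        have hv := h v
        simpa [hχ, decide_eq_decide] using hv
      apply Finpartition.ext
      rw [hA m, hA m', hAeq]
    · have hAeq : A m = univ \ A m' := by
        ext v
        have hv := h v
        simp only [hχ] at hv
        rw [← decide_not] at hv
        have hiff := decide_eq_decide.mp hv
        simp [mem_sdiff, hiff]
      have hcompl : univ \ (univ \ A m') = A m' := by
        rw [sdiff_sdiff_right_self]
        exact Finset.univ_inter _
      apply Finpartition.ext
      rw [hA m, hA m', hAeq, hcompl, Finset.pair_comm]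
  set v₀ : Fin i := ⟨0, by omega⟩ with hv₀
  set s₀ : Fin (2 ^ (k - 1)) → Bool := χ v₀ with hs₀
  set S : Finset (Fin (2 ^ (k - 1)) → Bool) := univ.image χ with hS
  have hs₀S : s₀ ∈ S := Finset.mem_image_of_mem _ (mem_univ _)
  have hχS : ∀ v, χ v ∈ S := fun v => Finset.mem_image_of_mem _ (mem_univ _)
  -- each column is nonconstant relative to s₀
  have hnonconst : ∀ m, ∃ v : Fin i, χ v m ≠ s₀ m := by
    intro m
    have hAne : (A m).Nonempty :=
      (C m).nonempty_of_mem_parts (by rw [hA m]; simp)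
    have hBne : (univ \ A m).Nonempty :=
      (C m).nonempty_of_mem_parts (by rw [hA m]; simp)
    by_cases h0 : v₀ ∈ A m
    · obtain ⟨u, hu⟩ := hBne
      exact ⟨u, by simp [hχ, hs₀, h0, (mem_sdiff.mp hu).2]⟩
    · obtain ⟨u, hu⟩ := hAne
      exact ⟨u, by simp [hχ, hs₀, h0, hu]⟩
  -- counting injection
  set H : (Fin (2 ^ (k - 1)) ⊕ Unit) × Bool → (↥S → Bool) := fun x s =>
    Sum.elim (fun m => xor (xor (s.1 m) (s₀ m)) x.2) (fun _ => x.2) x.1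
    with hH
  have bres : ∀ a b c d : Bool, xor a c = xor b d → (c = d → a = b) ∧ (c ≠ d → a = !b) := by
    decide
  have bcancel : ∀ a b e : Bool, xor (xor a b) e = e → a = b := by decide
  have bouter : ∀ x y e : Bool, xor x e = xor y e → x = y := by decide
  have hHinj : Function.Injective H := by
    rintro ⟨x, b⟩ ⟨x', b'⟩ h
    have hb : b = b' := by
      have h0 := congrFun h ⟨s₀, hs₀S⟩
      rcases x with m | u <;> rcases x' with m' | u' <;>
        simpa only [hH, Sum.elim_inl, Sum.elim_inr, Bool.xor_self, Bool.false_xor] using h0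
    subst hb
    rcases x with m | u <;> rcases x' with m' | u'
    · have key : ∀ v, xor (χ v m) (s₀ m) = xor (χ v m') (s₀ m') := by
        intro v
        have h0 := congrFun h ⟨χ v, hχS v⟩
        simp only [hH, Sum.elim_inl] at h0
        exact bouter _ _ _ h0
      have hmm : m = m' := by
        apply hcol
        by_cases hcd : s₀ m = s₀ m'
        · exact Or.inl fun v => (bres _ _ _ _ (key v)).1 hcd
        · exact Or.inr fun v => (bres _ _ _ _ (key v)).2 hcd
      rw [hmm]
    · exfalso
      obtain ⟨v, hv⟩ := hnonconst m
      have h0 := congrFun h ⟨χ v, hχS v⟩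
      simp only [hH, Sum.elim_inl, Sum.elim_inr] at h0
      exact hv (bcancel _ _ _ h0)
    · exfalso
      obtain ⟨v, hv⟩ := hnonconst m'
      have h0 := congrFun h ⟨χ v, hχS v⟩
      simp only [hH, Sum.elim_inl, Sum.elim_inr] at h0
      exact hv (bcancel _ _ _ h0.symm)
    · rfl
  -- counting
  have hcard : (2 ^ (k - 1) + 1) * 2 ≤ 2 ^ S.card := by
    have h := Fintype.card_le_of_injective H hHinj
    simpa [Fintype.card_fun, Fintype.card_coe] using h
  have hrk : k + 1 ≤ S.card := by
    by_contra hlt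
    push_neg at hlt
    have hk' : k - 1 + 1 = k := Nat.succ_pred_eq_of_pos hk
    have h1 : 2 ^ k < (2 ^ (k - 1) + 1) * 2 := by
      have : 2 ^ k = 2 ^ (k - 1) * 2 := by rw [← pow_succ, hk']
      omega
    have h2 : 2 ^ S.card ≤ 2 ^ k := Nat.pow_le_pow_right (by norm_num) (by omega)
    omega
  -- choose k+1 signature classes
  obtain ⟨T, hTS, hT⟩ := Finset.exists_subset_card_eq hrk
  set ε := T.equivFinOfCardEq hT with hε
  set c : Fin i → Fin (k + 1) :=
    fun v => if h : χ v ∈ T then ε ⟨χ v, h⟩ else 0 with hc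
  have hcsurj : Function.Surjective c := by
    intro j
    have hmem : ((ε.symm j : ↥T) : Fin (2 ^ (k - 1)) → Bool) ∈ T := (ε.symm j).2
    obtain ⟨v, -, hv⟩ := Finset.mem_image.mp (hTS hmem)
    refine ⟨v, ?_⟩
    have hvT : χ v ∈ T := hv ▸ hmem
    simp only [hc]
    rw [dif_pos hvT]
    have heq : (⟨χ v, hvT⟩ : ↥T) = ε.symm j := Subtype.ext hv
    rw [heq, Equiv.apply_symm_apply]
  -- the partition
  set st : Setoid (Fin i) :=
    ⟨fun a b => c a = c b, ⟨fun _ => rfl, fun h => h.symm, fun h h' => h.trans h'⟩⟩ with hst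
  set P := Finpartition.ofSetoid st with hP
  have hsame : ∀ v w : Fin i, c v = c w → ∃ t ∈ P.parts, v ∈ t ∧ w ∈ t := by
    intro v w hvw
    exact ⟨P.part v, P.part_mem.mpr (mem_univ v), P.mem_part (mem_univ v),
      (Finpartition.mem_part_ofSetoid_iff_rel).mpr hvw⟩
  have hparts : P.parts.card = k + 1 := by
    have h1 : P.parts =
        (univ : Finset (Fin (k + 1))).image
          (fun j => ({b | j = c b} : Finset (Fin i))) := by
      rw [hP]
      show univ.image (fun a => ({b | st.r a b} : Finset (Fin i))) = _
      rw [← Finset.image_univ_of_surjective hcsurj, Finset.image_image]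
      apply Finset.image_congr
      intro a _
      ext b
      simp only [Function.comp_apply, Finset.mem_filter]
      exact Iff.rfl
    have hginj : Function.Injective
        (fun j : Fin (k + 1) => ({b | j = c b} : Finset (Fin i))) := by
      intro j j' hjj
      obtain ⟨v, hv⟩ := hcsurj j
      have hvj : v ∈ ({b | j = c b} : Finset (Fin i)) := by simp [hv]
      have hjj2 : (filter (fun b => j = c b) univ : Finset (Fin i)) =
          filter (fun b => j' = c b) univ := hjj
      rw [hjj2] at hvj
      simp at hvj
      rw [← hv, hvj]
    rw [h1, Finset.card_image_of_injective _ hginj, card_univ, Fintype.card_fin]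
  -- every edge cut by P is cut by some C m
  have key : ∀ e : Sym2 (Fin i), crosses P e → ∃ m, crosses (C m) e := by
    intro e
    induction e using Sym2.ind with
    | _ v w =>
      intro hcr
      have hvw : c v ≠ c w := by
        intro hEq
        obtain ⟨t, ht, hv, hw⟩ := hsame v w hEq
        exact hcr ⟨t, ht, by
          intro u hu
          rcases Sym2.mem_iff.mp hu with rfl | rfl <;> assumption⟩
      have hχvw : χ v ≠ χ w := fun hEq => hvw (by rw [hc]; simp only; rw [hEq])
      obtain ⟨m, hm⟩ := Function.ne_iff.mp hχvw
      refine ⟨m, ?_⟩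
      rintro ⟨t, ht, hall⟩
      rw [hA m] at ht
      have hvt := hall v (by simp)
      have hwt := hall w (by simp)
      rcases Finset.mem_insert.mp ht with rfl | ht
      · exact hm (by simp [hχ, hvt, hwt])
      · rw [Finset.mem_singleton] at ht; subst ht
        exact hm (by simp [hχ, (mem_sdiff.mp hvt).2, (mem_sdiff.mp hwt).2])
  refine ⟨P, hparts, ?_⟩
  have hle : cutExp P ≤ Finset.univ.sup fun m => cutExp (C m) := by
    rw [Finsupp.le_def]
    intro e
    rw [cutExp_apply']
    split_ifs with he
    · rw [cutEdges, Finset.mem_filter] at he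
      obtain ⟨m, hm⟩ := key e.val he.2
      have h1 : cutExp (C m) ≤ Finset.univ.sup fun m => cutExp (C m) :=
        Finset.le_sup (f := fun m => cutExp (C m)) (mem_univ m)
      have h2 := Finsupp.le_def.mp h1 e
      have h3 : cutExp (C m) e = 1 := by
        rw [cutExp_apply', if_pos]
        rw [cutEdges, Finset.mem_filter]
        exact ⟨mem_univ _, hm⟩
      omega
    · exact Nat.zero_le _
  refine ⟨monomial ((Finset.univ.sup fun m => cutExp (C m)) - cutExp P) 1, ?_⟩
  rw [cutMon, monomial_mul, one_mul, add_tsub_cancel_of_le hle]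
end
end
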